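/- Let (A,B) be an (r,s)-loom with τ*(A) = s. Then B equals A^⊥, the set of all vertex subsets meeting every edge of A in exactly one vertex. -/

import Mathlib

open Finset

variable {V : Type*} [DecidableEq V]

/-- The vertex set of a hypergraph: the union of its edges. -/
def vertsH (H : Set (Finset V)) : Set V := ⋃ e ∈ H, (e : Set V)

/-- `c` is a cover of the hypergraph `H`: it meets every edge. -/
def IsCoverH (H : Set (Finset V)) (c : Finset V) : Prop := ∀ e ∈ H, (c ∩ e).Nonempty

/-- The covering number of `H` equals `k`. -/
def CoverNumIs (H : Set (Finset V)) (k : ℕ) : Prop :=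
  (∃ c, IsCoverH H c ∧ c.card = k) ∧ ∀ c, IsCoverH H c → k ≤ c.card

/-- `Ck H k` is the set of covers of `H` of size exactly `k`. -/
def Ck (H : Set (Finset V)) (k : ℕ) : Set (Finset V) := {c | c.card = k ∧ IsCoverH H c}

/-- `H` is `r`-uniform. -/
def UniformH (H : Set (Finset V)) (r : ℕ) : Prop := ∀ e ∈ H, e.card = r

/-- Orthogonality of hypergraphs: every pair of edges meets in exactly one vertex. -/
def OrthH (A B : Set (Finset V)) : Prop := ∀ a ∈ A, ∀ b ∈ B, (a ∩ b).card = 1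

/-- An `(r,s)`-loom. -/
def IsLoom (r s : ℕ) (A B : Set (Finset V)) : Prop :=
  1 ≤ r ∧ 1 ≤ s ∧ OrthH A B ∧ UniformH A r ∧ UniformH B s ∧
    CoverNumIs A s ∧ CoverNumIs B r ∧ A = Ck B r ∧ B = Ck A s
variable [Fintype V]

/-- A fractional matching of `H`. -/
def IsFracMatching (H : Set (Finset V)) (f : Finset V → ℝ) : Prop :=
  (∀ e, 0 ≤ f e) ∧ (∀ e, e ∉ H → f e = 0) ∧
    ∀ v : V, ∑ e ∈ Finset.univ.filter (fun e : Finset V => v ∈ e), f e ≤ 1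

/-- The fractional matching number of `H` equals `x`. -/
def FracMatchNumIs (H : Set (Finset V)) (x : ℝ) : Prop :=
  (∃ f, IsFracMatching H f ∧ ∑ e : Finset V, f e = x) ∧
    ∀ f, IsFracMatching H f → ∑ e : Finset V, f e ≤ x

/-- A fractional cover of `H`. -/
def IsFracCover (H : Set (Finset V)) (g : V → ℝ) : Prop :=
  (∀ v, 0 ≤ g v) ∧ ∀ e ∈ H, 1 ≤ ∑ v ∈ e, g v

/-- The fractional covering number of `H` equals `x`. -/
def FracCoverNumIs (H : Set (Finset V)) (x : ℝ) : Prop :=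
  (∃ g, IsFracCover H g ∧ ∑ v : V, g v = x) ∧
    ∀ g, IsFracCover H g → x ≤ ∑ v : V, g v

/-- A perfect fractional matching of `H`: saturated at every vertex of `H`. -/
def IsPerfectFracMatching (H : Set (Finset V)) (f : Finset V → ℝ) : Prop :=
  IsFracMatching H f ∧
    ∀ v ∈ vertsH H, ∑ e ∈ Finset.univ.filter (fun e : Finset V => v ∈ e), f e = 1

/-!
Let `e ∈ A^⊥` have `n` vertices. Every vertex of `A` lies in an edge of `B`, because the edges
of `A` are minimum covers of `B`; so pick an edge `b_v ∈ B` through each `v ∈ e`. The indicator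
of `e` and the average of the indicators of the `b_v` both put weight exactly `1` on every edge
of `A`, with totals `n` and `s`. Hence `(1 + 1/n) · average - (1/n) · 1_e`, which is still
nonnegative, is a fractional cover of `A` of total `s + s/n - 1`, and `τ*(A) = s` forces `n ≤ s`.
As `e` covers `A`, also `n ≥ τ(A) = s`, so `e` is a minimum cover of `A`, i.e. an edge of `B`.
-/

omit [DecidableEq V] [Fintype V] in
lemma mem_vertsH {H : Set (Finset V)} {v : V} : v ∈ vertsH H ↔ ∃ h ∈ H, v ∈ h := by
  simp [vertsH]

omit [Fintype V] in
lemma IsCoverH.erase {H : Set (Finset V)} {c : Finset V} (hc : IsCoverH H c) {v : V}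
    (hv : v ∉ vertsH H) : IsCoverH H (c.erase v) := by
  intro h hh
  obtain ⟨u, hu⟩ := hc h hh
  rw [mem_inter] at hu
  have huv : u ≠ v := fun huv => hv (mem_vertsH.mpr ⟨h, hh, huv ▸ hu.2⟩)
  exact ⟨u, mem_inter.mpr ⟨mem_erase.mpr ⟨huv, hu.1⟩, hu.2⟩⟩

omit [Fintype V] in
lemma CoverNumIs.coe_subset_vertsH {H : Set (Finset V)} {k : ℕ} (hH : CoverNumIs H k)
    {c : Finset V} (hc : IsCoverH H c) (hck : c.card = k) : (c : Set V) ⊆ vertsH H := by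
  intro v hv
  by_contra hvH
  have := hH.2 _ (hc.erase hvH)
  rw [card_erase_of_mem hv, hck] at this
  have : 0 < k := hck ▸ card_pos.mpr ⟨v, hv⟩
  omega

omit [Fintype V] in
lemma sum_ite_mem_one (a t : Finset V) :
    ∑ v ∈ a, (if v ∈ t then (1 : ℝ) else 0) = ((a ∩ t).card : ℝ) := by
  rw [sum_ite_mem, sum_const, nsmul_eq_mul, mul_one]

omit [Fintype V] in
lemma sum_sum_ite_mem_eq_sum_card_inter (a e : Finset V) (b : V → Finset V) :
    ∑ v ∈ a, ∑ u ∈ e, (if v ∈ b u then (1 : ℝ) else 0) = ∑ u ∈ e, ((a ∩ b u).card : ℝ) := by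
  rw [sum_comm]
  exact sum_congr rfl fun u _ => sum_ite_mem_one a (b u)

omit [DecidableEq V] in
lemma FracCoverNumIs.le_affine_combination {H : Set (Finset V)} {x : ℝ}
    (hx : FracCoverNumIs H x) {g₁ g₂ : V → ℝ} (hg₁ : ∀ h ∈ H, ∑ v ∈ h, g₁ v = 1)
    (hg₂ : ∀ h ∈ H, ∑ v ∈ h, g₂ v = 1) {t : ℝ} (hg : ∀ v, t * g₂ v ≤ (1 + t) * g₁ v) :
    x ≤ (1 + t) * ∑ v, g₁ v - t * ∑ v, g₂ v := by
  have hcover : IsFracCover H fun v => (1 + t) * g₁ v - t * g₂ v := by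
    refine ⟨fun v => sub_nonneg.mpr (hg v), fun h hh => ?_⟩
    rw [sum_sub_distrib, ← mul_sum, ← mul_sum, hg₁ h hh, hg₂ h hh]
    linarith
  simpa only [sum_sub_distrib, ← mul_sum] using hx.2 _ hcover

lemma FracCoverNumIs.card_le_of_orthH {A B : Set (Finset V)} {s : ℕ}
    (hA : FracCoverNumIs A s) (hAB : OrthH A B) (hB : UniformH B s) {e : Finset V}
    (he : ∀ a ∈ A, (e ∩ a).card = 1) (heB : (e : Set V) ⊆ vertsH B) : e.card ≤ s := by
  rcases Nat.eq_zero_or_pos e.card with hn | hn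
  · omega
  have hbex : ∀ v ∈ e, ∃ b ∈ B, v ∈ b := fun v hv => mem_vertsH.mp (heB hv)
  choose! b hbB hvb using hbex
  set n : ℝ := (e.card : ℝ)
  have hn' : (0 : ℝ) < n := Nat.cast_pos.mpr hn
  set g₁ : V → ℝ := fun v => (∑ u ∈ e, if v ∈ b u then 1 else 0) / n
  set g₂ : V → ℝ := fun v => if v ∈ e then 1 else 0
  have hg₁ : ∀ a ∈ A, ∑ v ∈ a, g₁ v = 1 := by
    intro a ha
    have hrow : ∀ u ∈ e, ((a ∩ b u).card : ℝ) = 1 := fun u hu => by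
      rw [hAB a ha _ (hbB u hu), Nat.cast_one]
    rw [← sum_div, sum_sum_ite_mem_eq_sum_card_inter, sum_congr rfl hrow, sum_const, nsmul_one,
      div_self hn'.ne']
  have hg₂ : ∀ a ∈ A, ∑ v ∈ a, g₂ v = 1 := by
    intro a ha
    rw [sum_ite_mem_one, inter_comm, he a ha, Nat.cast_one]
  have hsum₁ : ∑ v, g₁ v = s := by
    have hrow : ∀ u ∈ e, ((univ ∩ b u).card : ℝ) = s := fun u hu => by
      rw [univ_inter, hB _ (hbB u hu)]
    rw [← sum_div, sum_sum_ite_mem_eq_sum_card_inter, sum_congr rfl hrow, sum_const, nsmul_eq_mul,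
      mul_div_cancel_left₀ _ hn'.ne']
  have hsum₂ : ∑ v, g₂ v = n := by
    rw [sum_ite_mem_one, univ_inter]
  have hg : ∀ v, n⁻¹ * g₂ v ≤ (1 + n⁻¹) * g₁ v := by
    intro v
    by_cases hv : v ∈ e
    · have hone : 1 ≤ ∑ u ∈ e, (if v ∈ b u then (1 : ℝ) else 0) := by
        simpa [hvb v hv] using
          single_le_sum (f := fun u => if v ∈ b u then (1 : ℝ) else 0) (fun _ _ => by positivity) hv
      simp only [g₁, g₂, hv, if_true]
      rw [mul_one, mul_div_assoc', le_div_iff₀ hn', inv_mul_cancel₀ hn'.ne']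
      nlinarith [inv_pos.mpr hn']
    · simp only [g₁, g₂, hv, if_false, mul_zero]
      positivity
  have key := hA.le_affine_combination hg₁ hg₂ hg
  rw [hsum₁, hsum₂, inv_mul_cancel₀ hn'.ne'] at key
  have : (e.card : ℝ) ≤ s := by
    rw [← one_le_div hn', div_eq_inv_mul]
    linarith
  exact_mod_cast this

/-- in an `(r,s)`-loom with `τ*(A) = s`, `B` equals `A^⊥`,
the set of subsets of `V(A)` meeting every edge of `A` in exactly one vertex. -/
theorem stmt11 (r s : ℕ) (A B : Set (Finset V)) (hL : IsLoom r s A B)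
    (ht : FracCoverNumIs A (s : ℝ)) :
    B = {e : Finset V | (e : Set V) ⊆ vertsH A ∧ ∀ h ∈ A, (e ∩ h).card = 1} := by
  obtain ⟨-, -, hAB, -, hBu, hτA, hτB, hACk, hBCk⟩ := hL
  have hBA : ∀ b ∈ B, (b : Set V) ⊆ vertsH A := fun b hb =>
    let hb' : b ∈ Ck A s := hBCk ▸ hb
    hτA.coe_subset_vertsH hb'.2 hb'.1
  have hVAB : vertsH A ⊆ vertsH B := by
    intro v hv
    obtain ⟨a, ha, hva⟩ := mem_vertsH.mp hv
    have ha' : a ∈ Ck B r := hACk ▸ ha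
    exact hτB.coe_subset_vertsH ha'.2 ha'.1 hva
  ext e
  constructor
  · intro he
    exact ⟨hBA e he, fun a ha => inter_comm e a ▸ hAB a ha e he⟩
  · rintro ⟨heA, he⟩
    have hcov : IsCoverH A e := fun a ha => card_pos.mp (by rw [he a ha]; exact one_pos)
    have hcard : e.card = s :=
      le_antisymm (ht.card_le_of_orthH hAB hBu he (heA.trans hVAB)) (hτA.2 e hcov)
    rw [hBCk]
    exact ⟨hcard, hcov⟩
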